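/- arXiv:1910.05690 — 2 statements merged into one kernel-verified Lean document; each statement's English description precedes it below -/
import Mathlib

section
/- Let R be a graded k-algebra with a degree -1 right q-derivation d, M a graded right R-module with a q-connection ∇ relative to d. Then for all n ≥ 0, homogeneous a ∈ R and m ∈ M: ∇^n(ma) = Σ_{i=0}^{n} q^{(n-i)(deg(a)-i)} · [n choose i]_q · ∇^{n-i}(m) · d^i(a). -/
noncomputable def qPoly (n : ℕ) : Polynomial ℤ :=
  ∑ i ∈ Finset.range n, Polynomial.X ^ i

noncomputable def qFact (n : ℕ) : Polynomial ℤ :=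
  ∏ i ∈ Finset.range n, qPoly (i + 1)

noncomputable def gaussPoly (n m : ℕ) : Polynomial ℤ :=
  Polynomial.divByMonic (qFact n) (qFact m * qFact (n - m))

/-- The Gaussian binomial coefficient `[n choose m]_q` in a commutative ring `k`. -/
noncomputable def qBinom (k : Type*) [CommRing k] (q : k) (n m : ℕ) : k :=
  Polynomial.eval₂ (Int.castRingHom k) q (gaussPoly n m)


open Polynomial Finset

noncomputable def gP : ℕ → ℕ → Polynomial ℤ
  | 0, 0 => 1
  | 0, _+1 => 0
  | _+1, 0 => 1
  | n+1, m+1 => gP n (m+1) + Polynomial.X ^ (n - m) * gP n m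

lemma gP_zero_of_lt : ∀ n m : ℕ, n < m → gP n m = 0
  | 0, _+1, _ => rfl
  | n+1, m+1, h => by
      rw [gP, gP_zero_of_lt n (m+1) (by omega), gP_zero_of_lt n m (by omega)]
      ring

lemma gP_diag : ∀ n : ℕ, gP n n = 1
  | 0 => rfl
  | n+1 => by rw [gP, gP_zero_of_lt n (n+1) (by omega), gP_diag n, Nat.sub_self]; ring

lemma gP_zero_right : ∀ n : ℕ, gP n 0 = 1
  | 0 => rfl
  | _+1 => rfl

lemma qPoly_add (a b : ℕ) : qPoly (a + b) = qPoly a + Polynomial.X ^ a * qPoly b := by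
  unfold qPoly
  rw [Finset.sum_range_add, Finset.mul_sum]
  simp [pow_add]

lemma qPoly_monic (n : ℕ) : (qPoly (n + 1)).Monic :=
  Polynomial.monic_geom_sum_X (by omega)

lemma qFact_monic (n : ℕ) : (qFact n).Monic :=
  Polynomial.monic_prod_of_monic _ _ fun i _ => qPoly_monic i

lemma qFact_succ (n : ℕ) : qFact (n + 1) = qFact n * qPoly (n + 1) :=
  Finset.prod_range_succ _ _

lemma qFact_mul_gP : ∀ n m : ℕ, m ≤ n → qFact m * qFact (n - m) * gP n m = qFact n
  | 0, 0, _ => by simp [qFact, gP]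
  | n+1, 0, _ => by simp [gP_zero_right, qFact]
  | n+1, m+1, h => by
    rcases eq_or_lt_of_le h with he | hlt
    · obtain rfl : m = n := by omega
      simp [gP_diag, qFact]
    · have hm1 : m + 1 ≤ n := by omega
      have hm : m ≤ n := by omega
      rw [gP, mul_add]
      have e1 : n + 1 - (m + 1) = n - m := by omega
      have e2 : n - m = (n - (m+1)) + 1 := by omega
      have hf : qFact (n - m) = qFact (n - (m+1)) * qPoly (n - m) := by
        rw [e2]; exact qFact_succ _
      calc qFact (m+1) * qFact (n+1-(m+1)) * gP n (m+1)
            + qFact (m+1) * qFact (n+1-(m+1)) * (Polynomial.X ^ (n-m) * gP n m)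
          = (qFact (m+1) * qFact (n-(m+1)) * gP n (m+1)) * qPoly (n-m)
            + (qFact m * qFact (n-m) * gP n m) * (Polynomial.X ^ (n-m) * qPoly (m+1)) := by
            rw [e1, hf, qFact_succ m]
            ring
        _ = qFact n * qPoly (n-m) + qFact n * (Polynomial.X ^ (n-m) * qPoly (m+1)) := by
            rw [qFact_mul_gP n (m+1) hm1, qFact_mul_gP n m hm]
        _ = qFact n * qPoly (n+1) := by
            rw [← mul_add, show n + 1 = (n - m) + (m + 1) by omega, qPoly_add (n-m) (m+1)]
        _ = qFact (n+1) := (qFact_succ n).symm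

lemma gaussPoly_eq_gP {n m : ℕ} (h : m ≤ n) : gaussPoly n m = gP n m := by
  unfold gaussPoly
  rw [← qFact_mul_gP n m h, Polynomial.mul_divByMonic_cancel_left _
    ((qFact_monic m).mul (qFact_monic (n - m)))]

lemma qBinom_eq {k : Type*} [CommRing k] (q : k) {n m : ℕ} (h : m ≤ n) :
    qBinom k q n m = Polynomial.eval₂ (Int.castRingHom k) q (gP n m) := by
  rw [qBinom, gaussPoly_eq_gP h]

noncomputable def gB {k : Type*} [CommRing k] (q : k) (n m : ℕ) : k :=
  (gP n m).eval₂ (Int.castRingHom k) q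

lemma gB_zero_right {k : Type*} [CommRing k] (q : k) (n : ℕ) : gB q n 0 = 1 := by
  rw [gB, gP_zero_right, Polynomial.eval₂_one]

lemma gB_zero_of_lt {k : Type*} [CommRing k] (q : k) {n m : ℕ} (h : n < m) :
    gB q n m = 0 := by
  rw [gB, gP_zero_of_lt n m h, Polynomial.eval₂_zero]

lemma gB_rec {k : Type*} [CommRing k] (q : k) (n m : ℕ) :
    gB q (n+1) (m+1) = gB q n (m+1) + q ^ (n-m) * gB q n m := by
  rw [gB, gP, Polynomial.eval₂_add, Polynomial.eval₂_mul, Polynomial.eval₂_X_pow]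
  rfl

lemma qBinom_eq_gB {k : Type*} [CommRing k] (q : k) {n m : ℕ} (h : m ≤ n) :
    qBinom k q n m = gB q n m := qBinom_eq q h

theorem iterated_qConnection_formula_aux {k : Type*} [CommRing k] (q : k)
    {A : Type*} [Ring A] [Algebra k A] (𝒜 : ℕ → Submodule k A)
    (d : Module.End k A)
    (hd0 : ∀ a ∈ 𝒜 0, d a = 0)
    (hd : ∀ (n : ℕ), ∀ a ∈ 𝒜 (n + 1), d a ∈ 𝒜 n)
    {M : Type*} [AddCommGroup M] [Module k M]
    (act : M →ₗ[k] A →ₗ[k] M)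
    (conn : Module.End k M)
    (hconn : ∀ (m : ℕ) (x : M) (a : A), a ∈ 𝒜 m →
      conn (act x a) = act x (d a) + q ^ m • act (conn x) a)
    (n dega : ℕ) (a : A) (ha : a ∈ 𝒜 dega) (x : M) :
    (conn ^ n) (act x a)
      = ∑ i ∈ Finset.range (n + 1),
          (q ^ ((n - i) * (dega - i)) * gB q n i) •
            act ((conn ^ (n - i)) x) ((d ^ i) a) := by
  -- preliminary facts about iterated d on a
  have hdi : ∀ i : ℕ, (d ^ i) a ∈ 𝒜 (dega - i) := by
    intro i
    induction i with
    | zero => simpa using ha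
    | succ i ih =>
      rw [pow_succ', Module.End.mul_apply]
      rcases Nat.eq_zero_or_pos (dega - i) with h0 | hpos
      · rw [h0] at ih
        rw [hd0 _ ih]
        exact Submodule.zero_mem _
      · have : dega - i = (dega - (i+1)) + 1 := by omega
        rw [this] at ih
        exact hd _ _ ih
  have hdz : ∀ i : ℕ, dega < i → (d ^ i) a = 0 := by
    intro i hi
    induction i with
    | zero => omega
    | succ i ih =>
      rw [pow_succ', Module.End.mul_apply]
      rcases Nat.lt_or_ge dega i with h | h
      · rw [ih h, map_zero]
      · have : i = dega := by omega
        subst this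
        have := hdi i
        rw [Nat.sub_self] at this
        exact hd0 _ this
  induction n with
  | zero =>
    rw [Finset.sum_range_one]
    simp [gB_zero_right]
  | succ n ih =>
    rw [pow_succ', Module.End.mul_apply, ih, map_sum]
    have step1 : ∀ i ∈ Finset.range (n+1),
        conn ((q ^ ((n - i) * (dega - i)) * gB q n i) •
            act ((conn ^ (n - i)) x) ((d ^ i) a))
          = (q ^ ((n - i) * (dega - i)) * gB q n i) •
              act ((conn ^ (n - i)) x) ((d ^ (i+1)) a)
            + ((q ^ ((n - i) * (dega - i)) * gB q n i) * q ^ (dega - i)) •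
              act ((conn ^ ((n - i) + 1)) x) ((d ^ i) a) := by
      intro i _
      have hd' : (d ^ (i+1)) a = d ((d ^ i) a) := by
        rw [pow_succ', Module.End.mul_apply]
      have hc' : (conn ^ ((n - i) + 1)) x = conn ((conn ^ (n - i)) x) := by
        rw [pow_succ', Module.End.mul_apply]
      rw [map_smul, hconn (dega - i) _ _ (hdi i), smul_add, smul_smul, hd', hc']
    rw [Finset.sum_congr rfl step1, Finset.sum_add_distrib]
    -- extend the second sum to range (n+2)
    have hext : ∑ i ∈ Finset.range (n+1),
          ((q ^ ((n - i) * (dega - i)) * gB q n i) * q ^ (dega - i)) •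
            act ((conn ^ ((n - i) + 1)) x) ((d ^ i) a)
        = ∑ i ∈ Finset.range (n+2),
          ((q ^ ((n - i) * (dega - i)) * gB q n i) * q ^ (dega - i)) •
            act ((conn ^ ((n - i) + 1)) x) ((d ^ i) a) := by
      rw [Finset.sum_range_succ (n := n+1)]
      rw [gB_zero_of_lt q (by omega : n < n + 1)]
      simp
    rw [hext, Finset.sum_range_succ' _ (n+1)]
    -- rewrite RHS
    conv_rhs => rw [Finset.sum_range_succ']
    rw [← add_assoc, ← Finset.sum_add_distrib]
    congr 1
    · apply Finset.sum_congr rfl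
      intro i hi
      have hin : i ≤ n := by
        have := Finset.mem_range.mp hi; omega
      have e2 : n + 1 - (i+1) = n - i := by omega
      rw [e2]
      by_cases hideg : dega ≤ i
      · -- the module element is zero
        rw [hdz (i+1) (by omega)]
        simp
      · -- coefficient identity; here i < dega
        rcases Nat.lt_or_ge i n with hin' | hin'
        · have e3 : n - (i+1) + 1 = n - i := by omega
          rw [e3, ← add_smul]
          congr 1
          rw [gB_rec q n i]
          have h1 : n - i = (n - (i+1)) + 1 := by omega
          have h2 : dega - i = (dega - (i+1)) + 1 := by omega
          rw [h1, h2]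
          set u := n - (i+1)
          set v := dega - (i+1)
          rw [show (u+1)*(v+1) = u*v + u + v + 1 by ring,
            show (u+1)*v = u*v + v by ring]
          simp only [pow_add, pow_succ]
          ring
        · have hni : i = n := by omega
          subst hni
          have hz : gB q i (i+1) = 0 := gB_zero_of_lt q (by omega)
          rw [gB_rec q i i, hz, Nat.sub_self]
          simp
    · -- the i = 0 terms
      simp only [Nat.sub_zero, gB_zero_right, mul_one]
      rw [← pow_add, show n * dega + dega = (n+1) * dega by ring]

/-- Proposition: iterated `q`-connection formula. Let `R` (here `A` with grading `𝒜`) be a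
graded `k`-algebra with a degree `-1` right `q`-derivation `d`, and `M` a graded right
`R`-module (with right action `act`) equipped with a `q`-connection `conn` relative to `d`.
Then for all `n ≥ 0`, homogeneous `a ∈ R` of degree `dega` and `x ∈ M`:
`conn^n (x·a) = ∑_{i=0}^{n} q^{(n-i)(deg a - i)} [n choose i]_q conn^{n-i}(x) · d^i(a)`. -/
theorem iterated_qConnection_formula {k : Type*} [CommRing k] (q : k)
    {A : Type*} [Ring A] [Algebra k A] (𝒜 : ℕ → Submodule k A)
    (d : Module.End k A)
    (hd0 : ∀ a ∈ 𝒜 0, d a = 0)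
    (hd : ∀ (n : ℕ), ∀ a ∈ 𝒜 (n + 1), d a ∈ 𝒜 n)
    (hleib : ∀ (n m : ℕ) (a b : A), a ∈ 𝒜 n → b ∈ 𝒜 m →
      d (a * b) = a * d b + q ^ m • (d a * b))
    {M : Type*} [AddCommGroup M] [Module k M]
    (act : M →ₗ[k] A →ₗ[k] M)
    (hact : ∀ (x : M) (a b : A), act (act x a) b = act x (a * b))
    (hact1 : ∀ x : M, act x 1 = x)
    (conn : Module.End k M)
    (hconn : ∀ (m : ℕ) (x : M) (a : A), a ∈ 𝒜 m →
      conn (act x a) = act x (d a) + q ^ m • act (conn x) a)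
    (n dega : ℕ) (a : A) (ha : a ∈ 𝒜 dega) (x : M) :
    (conn ^ n) (act x a)
      = ∑ i ∈ Finset.range (n + 1),
          (q ^ ((n - i) * (dega - i)) * qBinom k q n i) •
            act ((conn ^ (n - i)) x) ((d ^ i) a) := by
  rw [iterated_qConnection_formula_aux q 𝒜 d hd0 hd act conn hconn n dega a ha x]
  refine Finset.sum_congr rfl fun i hi => ?_
  rw [qBinom_eq_gB q (show i ≤ n by have := Finset.mem_range.mp hi; omega)]
end

section
/- Let M be a graded right D-module over the q-divided power algebra D equipped with a q-connection ∇. Then ∇ : M → M is surjective, and the natural map ker(∇) ⊗_k D → M is an isomorphism of D-modules. -/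
open TensorProduct

/-- Right multiplication on the `q`-divided power algebra `D = ⊕ k·x^{[n]}` (realized as
`ℕ →₀ k`): `x^{[a]}·x^{[b]} = [a+b choose a]_q x^{[a+b]}`. -/
noncomputable def mulRightL {k : Type*} [CommRing k] (q : k) (g : ℕ →₀ k) :
    (ℕ →₀ k) →ₗ[k] (ℕ →₀ k) :=
  Finsupp.lsum k fun a =>
    g.sum fun b cb =>
      (qBinom k q (a + b) a * cb) • (Finsupp.lsingle (a + b) : k →ₗ[k] (ℕ →₀ k))

/-- The multiplication of the `q`-divided power algebra `D`. -/
noncomputable def Dmul {k : Type*} [CommRing k] (q : k) (f g : ℕ →₀ k) : ℕ →₀ k :=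
  mulRightL q g f

/-- The degree `-1` map `d : D → D`, `x^{[n]} ↦ x^{[n-1]}` (and `x^{[0]} ↦ 0`). -/
noncomputable def DdL {k : Type*} [CommRing k] : (ℕ →₀ k) →ₗ[k] (ℕ →₀ k) :=
  Finsupp.lsum k fun a =>
    if a = 0 then 0 else (Finsupp.lsingle (a - 1) : k →ₗ[k] (ℕ →₀ k))

/-!
Let `K = ker ∇` and read `κ` through `K ⊗ D ≃ ℕ →₀ K` as `φ : (xⱼ) ↦ ∑ⱼ xⱼ·x^{[j]}`. The
Leibniz rule gives `∇ ∘ φ = φ ∘ shiftDown` with `shiftDown (xⱼ) = (xⱼ₊₁)`, and `φ` is the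
identity on the `0`-th summand. Hence `φ` is injective by induction on the length of the
support. If `∇ y = φ g`, then `y - φ (shifted-up g)` lies in `K`, so the image of `φ` is closed
under `∇`-preimages; since `∇` lowers the degree and kills `M₀`, it contains every `Mₙ`.
-/

namespace Finsupp

variable {R N : Type*} [Semiring R] [AddCommMonoid N] [Module R N]

variable (R N) in
noncomputable abbrev shiftDown : (ℕ →₀ N) →ₗ[R] (ℕ →₀ N) :=
  lcomapDomain Nat.succ Nat.succ_injective

theorem shiftDown_mapDomain_succ (g : ℕ →₀ N) : shiftDown R N (mapDomain Nat.succ g) = g :=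
  comapDomain_mapDomain _ Nat.succ_injective g

theorem eq_single_zero_of_shiftDown_eq_zero {g : ℕ →₀ N} (hg : shiftDown R N g = 0) :
    g = single 0 (g 0) := by
  ext (_ | i)
  · simp
  · simpa using DFunLike.congr_fun hg i

theorem support_shiftDown_subset {g : ℕ →₀ N} {n : ℕ} (hg : g.support ⊆ Finset.range (n + 1)) :
    (shiftDown R N g).support ⊆ Finset.range n := by
  intro i hi
  have := hg (by simpa using hi)
  simp only [Finset.mem_range] at this ⊢
  omega

end Finsupp

open Finsupp LinearMap

section Shift

variable {R N M : Type*} [Ring R] [AddCommGroup N] [Module R N] [AddCommGroup M] [Module R M]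
  {φ : (ℕ →₀ N) →ₗ[R] M} {T : Module.End R M}

theorem injective_of_comp_eq_comp_shiftDown (hT : T ∘ₗ φ = φ ∘ₗ shiftDown R N)
    (h0 : Function.Injective (φ ∘ₗ lsingle 0)) : Function.Injective φ := by
  rw [injective_iff_map_eq_zero] at h0 ⊢
  suffices ∀ n, ∀ g : ℕ →₀ N, g.support ⊆ Finset.range n → φ g = 0 → g = 0 from
    fun g ↦ this _ g (Finset.exists_nat_subset_range g.support).choose_spec
  intro n
  induction n with
  | zero => simp [support_eq_empty]
  | succ n ih =>
    intro g hsupp hg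
    have hshift : shiftDown R N g = 0 :=
      ih _ (support_shiftDown_subset hsupp) (by rw [← comp_apply, ← hT, comp_apply, hg, map_zero])
    rw [eq_single_zero_of_shiftDown_eq_zero hshift] at hg ⊢
    rw [h0 _ hg, single_zero]

theorem apply_apply_mapDomain_succ (hT : T ∘ₗ φ = φ ∘ₗ shiftDown R N) (g : ℕ →₀ N) :
    T (φ (mapDomain Nat.succ g)) = φ g := by
  rw [← comp_apply, hT, comp_apply, shiftDown_mapDomain_succ]

theorem surjective_of_comp_eq_comp_shiftDown (hT : T ∘ₗ φ = φ ∘ₗ shiftDown R N)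
    (hφ : Function.Surjective φ) : Function.Surjective T := by
  intro y
  obtain ⟨g, rfl⟩ := hφ y
  exact ⟨_, apply_apply_mapDomain_succ hT g⟩

theorem comap_range_le_range (hT : T ∘ₗ φ = φ ∘ₗ shiftDown R N) (hker : ker T ≤ range φ) :
    (range φ).comap T ≤ range φ := by
  rintro y ⟨g, hg⟩
  have : y - φ (mapDomain Nat.succ g) ∈ ker T := by
    rw [mem_ker, map_sub, apply_apply_mapDomain_succ hT, hg, sub_self]
  obtain ⟨g', hg'⟩ := hker this
  exact ⟨g' + mapDomain Nat.succ g, by rw [map_add, hg', sub_add_cancel]⟩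

end Shift

section Graded

variable {R M : Type*} [Semiring R] [AddCommMonoid M] [Module R M] {T : Module.End R M}

theorem Submodule.ker_pow_le_of_comap_le {P : Submodule R M} (hP : P.comap T ≤ P) (n : ℕ) :
    ker (T ^ n) ≤ P := by
  induction n with
  | zero => simp [Module.End.one_eq_id]
  | succ n ih =>
    intro y hy
    exact hP (ih (by rwa [mem_ker, ← Module.End.mul_apply, ← pow_succ]))

theorem le_ker_pow_succ_of_lowers_degree {ℳ : ℕ → Submodule R M}
    (h0 : ∀ x ∈ ℳ 0, T x = 0) (hdeg : ∀ n, ∀ x ∈ ℳ (n + 1), T x ∈ ℳ n) (n : ℕ) :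
    ℳ n ≤ ker (T ^ (n + 1)) := by
  induction n with
  | zero => simpa [SetLike.le_def] using h0
  | succ n ih =>
    intro x hx
    rw [mem_ker, pow_succ, Module.End.mul_apply]
    exact ih (hdeg n x hx)

theorem Submodule.eq_top_of_comap_le_of_lowers_degree {ℳ : ℕ → Submodule R M}
    (hℳ : iSup ℳ = ⊤) (h0 : ∀ x ∈ ℳ 0, T x = 0) (hdeg : ∀ n, ∀ x ∈ ℳ (n + 1), T x ∈ ℳ n)
    {P : Submodule R M} (hP : P.comap T ≤ P) : P = ⊤ := by
  rw [eq_top_iff, ← hℳ]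
  exact iSup_le fun n ↦
    (le_ker_pow_succ_of_lowers_degree h0 hdeg n).trans (ker_pow_le_of_comap_le hP _)

end Graded

section QConnection

variable {k M : Type*} [CommRing k] [AddCommMonoid M] [Module k M]

theorem DdL_single_zero (b : k) : DdL (single 0 b) = 0 := by
  simp [DdL]

theorem DdL_single_succ (n : ℕ) (b : k) : DdL (single (n + 1) b) = single n b := by
  simp [DdL]

variable (act : M →ₗ[k] (ℕ →₀ k) →ₗ[k] M) (conn : Module.End k M)

noncomputable def horizontalExpansion : (ℕ →₀ ker conn) →ₗ[k] M :=
  lift (act ∘ₗ (ker conn).subtype) ∘ₗ (finsuppScalarRight k k (ker conn) ℕ).symm.toLinearMap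

theorem horizontalExpansion_single (j : ℕ) (x : ker conn) :
    horizontalExpansion act conn (single j x) = act x (single j 1) := by
  simp [horizontalExpansion, finsuppScalarRight_symm_apply_single]

theorem horizontalExpansion_comp_finsuppScalarRight :
    horizontalExpansion act conn ∘ₗ (finsuppScalarRight k k (ker conn) ℕ).toLinearMap =
      lift (act ∘ₗ (ker conn).subtype) := by
  simp [horizontalExpansion, comp_assoc]

variable {act conn} {q : k}

theorem conn_comp_act_of_conn_eq_zero
    (hconn : ∀ (m : ℕ) (c : k) (x : M),
      conn (act x (single m c)) = act x (DdL (single m c)) + q ^ m • act (conn x) (single m c))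
    {x : M} (hx : conn x = 0) : conn ∘ₗ act x = act x ∘ₗ DdL :=
  lhom_ext fun m c ↦ by simp [hconn m c x, hx]

theorem conn_comp_horizontalExpansion
    (hconn : ∀ (m : ℕ) (c : k) (x : M),
      conn (act x (single m c)) = act x (DdL (single m c)) + q ^ m • act (conn x) (single m c)) :
    conn ∘ₗ horizontalExpansion act conn = horizontalExpansion act conn ∘ₗ shiftDown k _ := by
  refine lhom_ext fun j x ↦ ?_
  have hx := conn_comp_act_of_conn_eq_zero hconn (mem_ker.mp x.2)
  rcases j with _ | j <;>
    simp [horizontalExpansion_single, ← comp_apply conn, hx, DdL_single_zero, DdL_single_succ]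

theorem lift_map_mulRightL (K : Submodule k M)
    (hactmul : ∀ (x : M) (f g : ℕ →₀ k), act (act x f) g = act x (Dmul q f g))
    (z : K ⊗[k] (ℕ →₀ k)) (f : ℕ →₀ k) :
    lift (act ∘ₗ K.subtype) (map LinearMap.id (mulRightL q f) z) =
      act (lift (act ∘ₗ K.subtype) z) f := by
  induction z using TensorProduct.induction_on with
  | zero => simp
  | tmul x g => exact (hactmul x g f).symm
  | add z₁ z₂ h₁ h₂ => simp only [map_add, LinearMap.add_apply, h₁, h₂]

end QConnection

theorem qConnection_surjective_and_kernel_tensor_iso_general {k : Type*} [Field k] (q : k)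
    {M : Type*} [AddCommGroup M] [Module k M]
    (act : M →ₗ[k] (ℕ →₀ k) →ₗ[k] M)
    (hactmul : ∀ (x : M) (f g : ℕ →₀ k), act (act x f) g = act x (Dmul q f g))
    (hact1 : ∀ x : M, act x (Finsupp.single 0 1) = x)
    (ℳ : ℕ → Submodule k M)
    (hdecomp : DirectSum.IsInternal ℳ)
    (conn : Module.End k M)
    (hconn0 : ∀ x ∈ ℳ 0, conn x = 0)
    (hconndeg : ∀ n : ℕ, ∀ x ∈ ℳ (n + 1), conn x ∈ ℳ n)
    (hconn : ∀ (m : ℕ) (c : k) (x : M),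
      conn (act x (Finsupp.single m c)) =
        act x (DdL (Finsupp.single m c)) + q ^ m • act (conn x) (Finsupp.single m c)) :
    let κ : (↥(LinearMap.ker conn) ⊗[k] (ℕ →₀ k)) →ₗ[k] M :=
      TensorProduct.lift (act ∘ₗ (LinearMap.ker conn).subtype);
    Function.Surjective conn ∧ Function.Bijective κ ∧
      (∀ (z : ↥(LinearMap.ker conn) ⊗[k] (ℕ →₀ k)) (f : ℕ →₀ k),
        κ (TensorProduct.map LinearMap.id (mulRightL q f) z) = act (κ z) f) := by
  intro κ
  set φ := horizontalExpansion act conn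
  have hφ := conn_comp_horizontalExpansion hconn
  have hφ0 (x : ker conn) : φ (single 0 x) = x := by
    rw [horizontalExpansion_single, hact1]
  have hinj : Function.Injective φ :=
    injective_of_comp_eq_comp_shiftDown hφ fun x y h ↦ Subtype.ext (by simpa [hφ0] using h)
  have hrange : range φ = ⊤ :=
    Submodule.eq_top_of_comap_le_of_lowers_degree hdecomp.submodule_iSup_eq_top hconn0 hconndeg
      (comap_range_le_range hφ fun x hx ↦ ⟨single 0 ⟨x, hx⟩, hφ0 _⟩)
  have hbij : Function.Bijective φ := ⟨hinj, range_eq_top.mp hrange⟩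
  refine ⟨surjective_of_comp_eq_comp_shiftDown hφ hbij.2, ?_, lift_map_mulRightL _ hactmul⟩
  rw [show κ = _ from (horizontalExpansion_comp_finsuppScalarRight act conn).symm, coe_comp,
    LinearEquiv.coe_coe]
  exact (EquivLike.bijective_comp _ _).mpr hbij

/-- Proposition: let `M` be a graded right `D`-module over the `q`-divided power algebra
`D` (realized as `ℕ →₀ k`) equipped with a `q`-connection `conn`. Then `conn : M → M` is
surjective, and the natural map `ker(conn) ⊗_k D → M` (induced by the right action) is an
isomorphism of `D`-modules. -/
theorem qConnection_surjective_and_kernel_tensor_iso {k : Type*} [Field k] (q : k)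
    {M : Type*} [AddCommGroup M] [Module k M]
    (act : M →ₗ[k] (ℕ →₀ k) →ₗ[k] M)
    (hactmul : ∀ (x : M) (f g : ℕ →₀ k), act (act x f) g = act x (Dmul q f g))
    (hact1 : ∀ x : M, act x (Finsupp.single 0 1) = x)
    (ℳ : ℕ → Submodule k M)
    (hdecomp : DirectSum.IsInternal ℳ)
    (hgr : ∀ (n m : ℕ) (c : k), ∀ x ∈ ℳ n, act x (Finsupp.single m c) ∈ ℳ (n + m))
    (conn : Module.End k M)
    (hconn0 : ∀ x ∈ ℳ 0, conn x = 0)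
    (hconndeg : ∀ n : ℕ, ∀ x ∈ ℳ (n + 1), conn x ∈ ℳ n)
    (hconn : ∀ (m : ℕ) (c : k) (x : M),
      conn (act x (Finsupp.single m c)) =
        act x (DdL (Finsupp.single m c)) + q ^ m • act (conn x) (Finsupp.single m c)) :
    let κ : (↥(LinearMap.ker conn) ⊗[k] (ℕ →₀ k)) →ₗ[k] M :=
      TensorProduct.lift (act ∘ₗ (LinearMap.ker conn).subtype);
    Function.Surjective conn ∧ Function.Bijective κ ∧
      (∀ (z : ↥(LinearMap.ker conn) ⊗[k] (ℕ →₀ k)) (f : ℕ →₀ k),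
        κ (TensorProduct.map LinearMap.id (mulRightL q f) z) = act (κ z) f) :=
  qConnection_surjective_and_kernel_tensor_iso_general q act hactmul hact1 ℳ hdecomp conn hconn0
    hconndeg hconn
end
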